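/- Let a_0 ∈ (0,1), set λ = 1 − a_0, and let Φ(λ,r) = 4r³λ² − (7r³ + 3r² − 3r + 1)λ + 6r³ − 2r² − 6r + 2. Then there exists a unique r_0 = r_0(a_0) in the open interval (r_*, 1/3) with Φ(λ, r_0) = 0, where r_* is the unique root in (0,1) of 3r³ − 5r² − 3r + 1 = 0; and for every function f(z) = Σ_{n=0}^∞ a_n z^n analytic in the unit disk D with f(0) = a_0 and Re f(z) < 1 for all z ∈ D, the inequality Σ_{n=0}^∞ |a_n| r^n + (1/(1+a_0) + r/(1−r)) · Σ_{n=1}^∞ |a_n|² r^{2n} ≤ 1 holds for all r ∈ [0, r_0]. -/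

import Mathlib

/-!
Put `λ = 1 - a₀`. On the circle `|z| = s < 1` the function `1 - Re f` is nonnegative with mean
`λ`, and its Fourier coefficient at `e^{-inθ}` (`n ≥ 1`) is `-aₙ sⁿ / 2`, because `conj f` has no
positive frequencies; hence `|aₙ| sⁿ ≤ 2λ`, and `|aₙ| ≤ 2λ` as `s → 1`. Summing geometric series,
the left-hand side is at most
`a₀ + 2λr/(1-r) + (1/(1+a₀) + r/(1-r)) · 4λ²r²/(1-r²) = 1 - λ Φ(λ,r) / ((1-r)²(1+r)(1+a₀))`.
Finally `Φ(λ,·)` is strictly decreasing on `[0, 1/3]`, positive at `r_*` and equal to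
`4λ(λ-4)/27 < 0` at `1/3`, so it has exactly one zero `r₀` there and is nonnegative on `[0, r₀]`.
-/

open Metric Complex MeasureTheory Real Filter Set ComplexConjugate Topology

section UnitDisk

variable {f : ℂ → ℂ} {a : ℕ → ℂ} {s : ℝ}

lemma integral_exp_int_mul_I (k : ℤ) :
    ∫ θ in (0 : ℝ)..2 * π, exp (k * θ * I) = if k = 0 then (2 * π : ℂ) else 0 := by
  split_ifs with hk
  · simp [hk]
  · have hkI : (k : ℂ) * I ≠ 0 := by simp [hk]
    simp_rw [mul_right_comm _ _ I]
    rw [integral_exp_mul_complex hkI, ofReal_zero, mul_zero, Complex.exp_zero,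
      show (k : ℂ) * I * ((2 * π : ℝ) : ℂ) = k * (2 * π * I) by push_cast; ring,
      exp_int_mul_two_pi_mul_I, sub_self, zero_div]

lemma summable_norm_mul_pow_of_hasSum
    (hf : ∀ z ∈ ball (0 : ℂ) 1, HasSum (fun n => a n * z ^ n) (f z))
    (hs0 : 0 ≤ s) (hs1 : s < 1) :
    Summable fun n => ‖a n‖ * s ^ n := by
  obtain ⟨t, hst, ht1⟩ := exists_between hs1
  have ht0 : 0 < t := hs0.trans_lt hst
  obtain ⟨C, hC⟩ : BddAbove (range fun n => ‖a n * (t : ℂ) ^ n‖) :=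
    (hf t (by simpa [abs_of_pos ht0] using ht1)).summable.tendsto_atTop_zero.norm.bddAbove_range
  refine .of_nonneg_of_le (fun n => by positivity) (fun n => ?_)
    ((summable_geometric_of_lt_one (by positivity) ((div_lt_one ht0).2 hst)).mul_left C)
  have hCn : ‖a n‖ * t ^ n ≤ C := by
    simpa [abs_of_pos ht0] using hC (mem_range_self n)
  calc ‖a n‖ * s ^ n = ‖a n‖ * t ^ n * (s / t) ^ n := by
        rw [div_pow, mul_assoc, mul_div_cancel₀ _ (by positivity)]
    _ ≤ C * (s / t) ^ n := by gcongr

lemma circleMap_zero_mem_ball_one (hs0 : 0 ≤ s) (hs1 : s < 1) (θ : ℝ) :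
    circleMap 0 s θ ∈ ball (0 : ℂ) 1 := by
  simpa [abs_of_nonneg hs0] using hs1

lemma hasSum_integral_circleMap_mul_exp
    (hf : ∀ z ∈ ball (0 : ℂ) 1, HasSum (fun n => a n * z ^ n) (f z))
    (hs0 : 0 ≤ s) (hs1 : s < 1) (k : ℤ) :
    HasSum (fun m : ℕ => a m * s ^ m * if (m : ℤ) + k = 0 then (2 * π : ℂ) else 0)
      (∫ θ in (0 : ℝ)..2 * π, f (circleMap 0 s θ) * exp (k * θ * I)) := by
  have hterm : ∀ (m : ℕ) (θ : ℝ), a m * circleMap 0 s θ ^ m * exp (k * θ * I) =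
      a m * s ^ m * exp (((m + k : ℤ) : ℂ) * θ * I) := by
    intro m θ
    rw [circleMap_zero, mul_pow, ← Complex.exp_nat_mul, mul_assoc (a m), mul_assoc, mul_assoc,
      ← Complex.exp_add]
    push_cast; ring_nf
  have hnorm : ∀ (m : ℕ) (θ : ℝ),
      ‖a m * circleMap 0 s θ ^ m * exp (k * θ * I)‖ = ‖a m‖ * s ^ m := fun m θ => by
    rw [hterm]
    simp [abs_of_nonneg hs0, norm_exp]
  have := intervalIntegral.hasSum_integral_of_dominated_convergence (μ := volume) (a := 0)
    (b := 2 * π) (f := fun θ => f (circleMap 0 s θ) * exp (k * θ * I))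
    (F := fun m θ => a m * circleMap 0 s θ ^ m * exp (k * θ * I))
    (fun m _ => ‖a m‖ * s ^ m) (fun m => by fun_prop)
    (fun m => ae_of_all _ fun θ _ => (hnorm m θ).le)
    (by simp [summable_norm_mul_pow_of_hasSum hf hs0 hs1]) intervalIntegrable_const
    (ae_of_all _ fun θ _ => (hf _ (circleMap_zero_mem_ball_one hs0 hs1 θ)).mul_right _)
  simpa only [hterm, intervalIntegral.integral_const_mul, integral_exp_int_mul_I] using this

lemma integral_circleMap_mul_exp_neg
    (hf : ∀ z ∈ ball (0 : ℂ) 1, HasSum (fun n => a n * z ^ n) (f z))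
    (hs0 : 0 ≤ s) (hs1 : s < 1) (n : ℕ) :
    ∫ θ in (0 : ℝ)..2 * π, f (circleMap 0 s θ) * exp (-(n * θ * I)) =
      2 * π * (a n * s ^ n) := by
  have h := hasSum_integral_circleMap_mul_exp hf hs0 hs1 (-n)
  push_cast [neg_mul] at h
  rw [h.unique (hasSum_single n fun m hm => by rw [if_neg (by omega), mul_zero])]
  simp only [add_neg_cancel, if_true]
  ring

lemma integral_circleMap_mul_exp_eq_zero
    (hf : ∀ z ∈ ball (0 : ℂ) 1, HasSum (fun n => a n * z ^ n) (f z))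
    (hs0 : 0 ≤ s) (hs1 : s < 1) {n : ℕ} (hn : n ≠ 0) :
    ∫ θ in (0 : ℝ)..2 * π, f (circleMap 0 s θ) * exp (n * θ * I) = 0 := by
  have h := hasSum_integral_circleMap_mul_exp hf hs0 hs1 n
  push_cast at h
  exact h.unique (by convert hasSum_zero with m; rw [if_neg (by omega), mul_zero])

lemma integral_circleMap
    (hf : ∀ z ∈ ball (0 : ℂ) 1, HasSum (fun n => a n * z ^ n) (f z))
    (hs0 : 0 ≤ s) (hs1 : s < 1) :
    ∫ θ in (0 : ℝ)..2 * π, f (circleMap 0 s θ) = 2 * π * a 0 := by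
  simpa using integral_circleMap_mul_exp_neg hf hs0 hs1 0

lemma continuous_comp_circleMap
    (hf : ∀ z ∈ ball (0 : ℂ) 1, HasSum (fun n => a n * z ^ n) (f z))
    (hs0 : 0 ≤ s) (hs1 : s < 1) :
    Continuous fun θ => f (circleMap 0 s θ) := by
  have hf' : (fun θ => f (circleMap 0 s θ)) = fun θ => ∑' m, a m * circleMap 0 s θ ^ m :=
    funext fun θ => (hf _ (circleMap_zero_mem_ball_one hs0 hs1 θ)).tsum_eq.symm
  rw [hf']
  exact continuous_tsum (fun m => by fun_prop) (summable_norm_mul_pow_of_hasSum hf hs0 hs1)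
    fun m θ => by simp [abs_of_nonneg hs0]

lemma norm_coeff_mul_pow_le_of_re_le_one
    (hf : ∀ z ∈ ball (0 : ℂ) 1, HasSum (fun n => a n * z ^ n) (f z))
    (hre : ∀ z ∈ ball (0 : ℂ) 1, (f z).re ≤ 1) (hs0 : 0 ≤ s) (hs1 : s < 1) {n : ℕ} (hn : n ≠ 0) :
    ‖a n‖ * s ^ n ≤ 2 * (1 - (a 0).re) := by
  set g : ℝ → ℂ := fun θ => f (circleMap 0 s θ)
  set u : ℝ → ℝ := fun θ => 1 - (g θ).re
  have hg : Continuous g := continuous_comp_circleMap hf hs0 hs1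
  have hu_nonneg : ∀ θ, 0 ≤ u θ := fun θ =>
    sub_nonneg.2 (hre _ (circleMap_zero_mem_ball_one hs0 hs1 θ))
  have hu_int : ∫ θ in (0 : ℝ)..2 * π, u θ = 2 * π * (1 - (a 0).re) := by
    have hre_int : ∫ θ in (0 : ℝ)..2 * π, (g θ).re = (∫ θ in (0 : ℝ)..2 * π, g θ).re :=
      intervalIntegral.intervalIntegral_re (hg.intervalIntegrable 0 (2 * π))
    rw [intervalIntegral.integral_sub intervalIntegrable_const
      (Continuous.intervalIntegrable (u := fun θ => (g θ).re) (by fun_prop) 0 (2 * π)),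
      hre_int, integral_circleMap hf hs0 hs1]
    simp [mul_sub]
  have hu_fourier : ∫ θ in (0 : ℝ)..2 * π, (u θ : ℂ) * exp (-(n * θ * I)) =
      -(π * (a n * s ^ n)) := by
    have hsplit : ∀ θ : ℝ, (u θ : ℂ) * exp (-(n * θ * I)) = exp ((-n : ℤ) * θ * I) -
        g θ * exp (-(n * θ * I)) / 2 - conj (g θ * exp (n * θ * I)) / 2 := by
      intro θ
      simp only [u, ofReal_sub, ofReal_one, re_eq_add_conj, map_mul, ← exp_conj, conj_ofReal,
        map_natCast, conj_I]
      push_cast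
      ring_nf
    simp only [hsplit]
    rw [intervalIntegral.integral_sub, intervalIntegral.integral_sub, intervalIntegral.integral_div,
      intervalIntegral.integral_div, intervalIntegral.intervalIntegral_conj,
      integral_exp_int_mul_I, integral_circleMap_mul_exp_neg hf hs0 hs1,
      integral_circleMap_mul_exp_eq_zero hf hs0 hs1 hn]
    · rw [if_neg (by omega), map_zero]; ring
    all_goals exact Continuous.intervalIntegrable (by fun_prop) _ _
  have hbound := intervalIntegral.norm_integral_le_integral_norm (μ := volume)
    (f := fun θ => (u θ : ℂ) * exp (-(n * θ * I))) two_pi_pos.le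
  have hnorm : ∀ θ, ‖(u θ : ℂ) * exp (-(n * θ * I))‖ = u θ := fun θ => by
    simp [norm_of_nonneg (hu_nonneg θ), norm_exp]
  simp only [hu_fourier, hnorm, hu_int] at hbound
  refine le_of_mul_le_mul_left ?_ pi_pos
  simpa [abs_of_nonneg hs0, abs_of_pos pi_pos, mul_assoc, mul_left_comm] using hbound

lemma norm_coeff_le_of_re_le_one
    (hf : ∀ z ∈ ball (0 : ℂ) 1, HasSum (fun n => a n * z ^ n) (f z))
    (hre : ∀ z ∈ ball (0 : ℂ) 1, (f z).re ≤ 1) {n : ℕ} (hn : n ≠ 0) :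
    ‖a n‖ ≤ 2 * (1 - (a 0).re) := by
  have h : Tendsto (fun s : ℝ => ‖a n‖ * s ^ n) (𝓝[<] 1) (𝓝 ‖a n‖) :=
    (Continuous.tendsto' (f := fun s : ℝ => ‖a n‖ * s ^ n) (by fun_prop) 1 ‖a n‖
      (by simp)).mono_left nhdsWithin_le_nhds
  refine le_of_tendsto h ?_
  filter_upwards [Ioo_mem_nhdsLT zero_lt_one] with s hs
  exact norm_coeff_mul_pow_le_of_re_le_one hf hre hs.1.le hs.2 hn

end UnitDisk

lemma tsum_le_of_le_geometric_succ {b : ℕ → ℝ} {M q : ℝ} (hb0 : ∀ n, 0 ≤ b n)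
    (hb : ∀ n, b n ≤ M * q ^ (n + 1)) (hq0 : 0 ≤ q) (hq1 : q < 1) :
    Summable b ∧ ∑' n, b n ≤ M * q / (1 - q) := by
  have hgeom : HasSum (fun n => M * q ^ (n + 1)) (M * q / (1 - q)) := by
    simpa [pow_succ', mul_assoc, div_eq_mul_inv] using
      (hasSum_geometric_of_lt_one hq0 hq1).mul_left (M * q)
  have hbs : Summable b := .of_nonneg_of_le hb0 hb hgeom.summable
  exact ⟨hbs, hasSum_le hb hbs.hasSum hgeom⟩

lemma tsum_norm_mul_pow_le {a : ℕ → ℂ} {M r : ℝ} (ha : ∀ n, ‖a (n + 1)‖ ≤ M)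
    (hr0 : 0 ≤ r) (hr1 : r < 1) :
    ∑' n, ‖a n‖ * r ^ n ≤ ‖a 0‖ + M * r / (1 - r) := by
  obtain ⟨hs, hle⟩ := tsum_le_of_le_geometric_succ (b := fun n => ‖a (n + 1)‖ * r ^ (n + 1))
    (fun n => by positivity) (fun n => mul_le_mul_of_nonneg_right (ha n) (by positivity)) hr0 hr1
  rw [tsum_eq_zero_add' (f := fun n => ‖a n‖ * r ^ n) hs, pow_zero, mul_one]
  exact add_le_add_right hle _

lemma tsum_sq_norm_mul_pow_le {a : ℕ → ℂ} {M r : ℝ} (ha : ∀ n, ‖a (n + 1)‖ ≤ M)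
    (hr0 : 0 ≤ r) (hr1 : r < 1) :
    ∑' n, ‖a (n + 1)‖ ^ 2 * r ^ (2 * (n + 1)) ≤ M ^ 2 * r ^ 2 / (1 - r ^ 2) := by
  refine (tsum_le_of_le_geometric_succ (fun n => by positivity) (fun n => ?_) (sq_nonneg r)
    (by nlinarith)).2
  rw [pow_mul]
  gcongr
  exact ha n

def bohrPhi (L r : ℝ) : ℝ :=
  4 * r ^ 3 * L ^ 2 - (7 * r ^ 3 + 3 * r ^ 2 - 3 * r + 1) * L + 6 * r ^ 3 - 2 * r ^ 2 - 6 * r + 2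

lemma continuous_bohrPhi (L : ℝ) : Continuous (bohrPhi L) := by
  unfold bohrPhi; fun_prop

lemma bohrPhi_one_third (L : ℝ) : bohrPhi L (1 / 3) = 4 / 27 * L * (L - 4) := by
  unfold bohrPhi; ring

lemma bohrPhi_pos_of_root {L r : ℝ} (hL : L < 1) (hr0 : 0 < r) (hr1 : r < 1)
    (hroot : 3 * r ^ 3 - 5 * r ^ 2 - 3 * r + 1 = 0) : 0 < bohrPhi L r := by
  have h : bohrPhi L r =
      (2 - L) * (3 * r ^ 3 - 5 * r ^ 2 - 3 * r + 1) + (1 - L) * (4 * r ^ 2 * (2 - r * L)) := by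
    unfold bohrPhi; ring
  rw [h, hroot, mul_zero, zero_add]
  have : r * L < 2 := by nlinarith
  have : 0 < 1 - L := by linarith
  positivity

lemma bohrPhi_strictAntiOn {L : ℝ} (hL0 : 0 ≤ L) (hL1 : L ≤ 1) :
    StrictAntiOn (bohrPhi L) (Icc 0 (1 / 3)) := by
  intro x ⟨hx0, _⟩ y ⟨_, hy⟩ hxy
  set S := x ^ 2 + x * y + y ^ 2
  set P := x + y
  have hfactor : bohrPhi L y - bohrPhi L x =
      (y - x) * (4 * S * L ^ 2 - (7 * S + 3 * P - 3) * L + 6 * S - 2 * P - 6) := by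
    unfold bohrPhi; ring
  have hS0 : 0 ≤ S := by positivity
  have hS : S ≤ 1 / 3 := by nlinarith
  have hP : P ≤ 2 / 3 := by linarith
  have hslope : 4 * S * L ^ 2 - (7 * S + 3 * P - 3) * L + 6 * S - 2 * P - 6 < 0 := by
    nlinarith [mul_nonneg hS0 (mul_nonneg hL0 (sub_nonneg.2 hL1)), mul_nonneg hS0 hL0,
      mul_nonneg (by linarith : (0 : ℝ) ≤ 1 - P) (sub_nonneg.2 hL1)]
  linarith [mul_neg_of_pos_of_neg (sub_pos.2 hxy) hslope]

lemma bohr_majorant_eq {a₀ r : ℝ} (ha₀ : 1 + a₀ ≠ 0) (hr : 1 - r ≠ 0) (hr' : 1 + r ≠ 0) :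
    a₀ + 2 * (1 - a₀) * r / (1 - r) +
        (1 / (1 + a₀) + r / (1 - r)) * ((2 * (1 - a₀)) ^ 2 * r ^ 2 / (1 - r ^ 2)) =
      1 - (1 - a₀) * bohrPhi (1 - a₀) r / ((1 - r) ^ 2 * (1 + r) * (1 + a₀)) := by
  have : 1 - r ^ 2 = (1 - r) * (1 + r) := by ring
  rw [this]
  unfold bohrPhi
  field_simp
  ring

/-- **Theorem 1, second part.** For `a₀ ∈ (0,1)` and `λ = 1 − a₀`, there is a unique
`r₀ ∈ (r_*, 1/3)` with `Φ(λ, r₀) = 0`, where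
`Φ(λ,r) = 4r³λ² − (7r³+3r²−3r+1)λ + 6r³−2r²−6r+2` and `r_*` is the unique root of
`3r³−5r²−3r+1 = 0` in `(0,1)`; and for every `f(z) = Σ aₙ zⁿ` analytic in the unit disk with
`f(0) = a₀` and `Re f(z) < 1`, the refined Bohr inequality holds for all `r ∈ [0, r₀]`. -/
theorem refined_bohr_re_lt_one_sharp_radius
    (a₀ : ℝ) (h0 : 0 < a₀) (h1 : a₀ < 1)
    (rs : ℝ) (hrs : rs ∈ Set.Ioo (0 : ℝ) 1)
    (hroot : 3 * rs ^ 3 - 5 * rs ^ 2 - 3 * rs + 1 = 0) :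
    ∃ r₀ ∈ Set.Ioo rs (1 / 3 : ℝ),
      (4 * r₀ ^ 3 * (1 - a₀) ^ 2 - (7 * r₀ ^ 3 + 3 * r₀ ^ 2 - 3 * r₀ + 1) * (1 - a₀) +
          6 * r₀ ^ 3 - 2 * r₀ ^ 2 - 6 * r₀ + 2 = 0) ∧
      (∀ r' ∈ Set.Ioo rs (1 / 3 : ℝ),
        4 * r' ^ 3 * (1 - a₀) ^ 2 - (7 * r' ^ 3 + 3 * r' ^ 2 - 3 * r' + 1) * (1 - a₀) +
          6 * r' ^ 3 - 2 * r' ^ 2 - 6 * r' + 2 = 0 → r' = r₀) ∧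
      ∀ (f : ℂ → ℂ) (a : ℕ → ℂ),
        (∀ z ∈ ball (0 : ℂ) 1, HasSum (fun n : ℕ => a n * z ^ n) (f z)) →
        (∀ z ∈ ball (0 : ℂ) 1, (f z).re < 1) →
        a 0 = (a₀ : ℂ) →
        ∀ r ∈ Set.Icc (0 : ℝ) r₀,
          (∑' n : ℕ, ‖a n‖ * r ^ n) +
            (1 / (1 + a₀) + r / (1 - r)) *
              ∑' n : ℕ, (‖a (n + 1)‖) ^ 2 * r ^ (2 * (n + 1)) ≤ 1 := by
  obtain ⟨hrs0, hrs1⟩ := hrs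
  have hrs_lt : rs < 1 / 3 := by
    nlinarith [mul_pos (mul_pos hrs0 hrs0) (by linarith : (0 : ℝ) < 5 - 3 * rs)]
  have hanti := bohrPhi_strictAntiOn (L := 1 - a₀) (by linarith) (by linarith)
  obtain ⟨r₀, hr₀, hΦr₀⟩ : ∃ r₀ ∈ Ioo rs (1 / 3), bohrPhi (1 - a₀) r₀ = 0 :=
    intermediate_value_Ioo' hrs_lt.le (continuous_bohrPhi _).continuousOn
      ⟨by rw [bohrPhi_one_third]; nlinarith, bohrPhi_pos_of_root (by linarith) hrs0 hrs1 hroot⟩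
  have hr₀_mem : r₀ ∈ Icc (0 : ℝ) (1 / 3) := ⟨(hrs0.trans hr₀.1).le, hr₀.2.le⟩
  refine ⟨r₀, hr₀, hΦr₀, fun r' hr' hΦr' =>
    hanti.injOn ⟨(hrs0.trans hr'.1).le, hr'.2.le⟩ hr₀_mem (hΦr'.trans hΦr₀.symm), ?_⟩
  intro f a hf hre ha0 r ⟨hr0, hr_le⟩
  have hr1 : r < 1 := by linarith [hr₀.2]
  have hcoef : ∀ n, ‖a (n + 1)‖ ≤ 2 * (1 - a₀) := fun n => by
    simpa [ha0] using norm_coeff_le_of_re_le_one hf (fun z hz => (hre z hz).le) n.succ_ne_zero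
  have hΦ : 0 ≤ bohrPhi (1 - a₀) r :=
    hΦr₀ ▸ hanti.antitoneOn ⟨hr0, hr_le.trans hr₀_mem.2⟩ hr₀_mem hr_le
  calc _ ≤ ‖a 0‖ + 2 * (1 - a₀) * r / (1 - r) +
        (1 / (1 + a₀) + r / (1 - r)) * ((2 * (1 - a₀)) ^ 2 * r ^ 2 / (1 - r ^ 2)) :=
        add_le_add (tsum_norm_mul_pow_le hcoef hr0 hr1) (mul_le_mul_of_nonneg_left
          (tsum_sq_norm_mul_pow_le hcoef hr0 hr1)
          (add_nonneg (by positivity) (div_nonneg hr0 (sub_nonneg.2 hr1.le))))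
    _ = 1 - (1 - a₀) * bohrPhi (1 - a₀) r / ((1 - r) ^ 2 * (1 + r) * (1 + a₀)) := by
        rw [ha0, norm_real, norm_of_nonneg h0.le]
        exact bohr_majorant_eq (by linarith) (by linarith) (by linarith)
    _ ≤ 1 := sub_le_self _ <| div_nonneg (mul_nonneg (by linarith) hΦ)
        (mul_nonneg (mul_nonneg (sq_nonneg _) (by linarith)) (by linarith))
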